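/- Let $h$ be an integer-valued function on the vertices of the $n$-dimensional hypercube $\{0,1\}^n$ such that along every edge (vertices differing in exactly one coordinate) the value of $h$ changes by exactly $1$ (increases or decreases by $1$), and suppose that for every face of dimension $2$ of the hypercube the restriction of $h$ does not attain its maximum at two distinct vertices of that square. If $h$ attains a minimum at the vertex $\underline{0} = (0,\dots,0)$, then for every vertex $e = (e_1,\dots,e_n)$ one has $h(e) = h(\underline{0}) + \sum_{i=1}^n e_i$. -/

import Mathlib

/-!
Induct on the weight `k + 1` of `e`. Choose `i` with `e i = true` and let `a` be `e` with that
coordinate switched off; by induction `h a = h 0 + k`, so `h e = h 0 + k ± 1`. The minus sign is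
impossible: for `k = 0` it puts a value below `h 0`, and otherwise some `j ≠ i` has `a j = true`,
and on the face through `e` in the directions `i, j` the function takes the values
`h 0 + k - 1, h 0 + k, h 0 + k, h 0 + k - 1` (at `e`, `a`, `e` with `j` switched off, and the
opposite vertex), so its maximum is attained at two vertices.
-/

open Finset Function

namespace Hypercube

variable {ι : Type*}

section Weight

variable [Fintype ι]

def weight (e : ι → Bool) : ℕ := #{i | e i = true}

theorem exists_eq_true_of_weight_pos {e : ι → Bool} (he : 0 < weight e) : ∃ i, e i = true := by
  obtain ⟨i, hi⟩ := card_pos.1 he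
  exact ⟨i, (mem_filter.1 hi).2⟩

theorem eq_false_of_weight_eq_zero {e : ι → Bool} (he : weight e = 0) : e = fun _ => false := by
  funext i
  by_contra hi
  exact absurd he (card_ne_zero_of_mem (mem_filter.2 ⟨mem_univ i, by simpa using hi⟩))

end Weight

variable [DecidableEq ι]

def face (i j : ι) (v : ι → Bool) : Set (ι → Bool) := {z | ∀ k, k ≠ i → k ≠ j → z k = v k}

def IsUnitStepOnEdges (h : (ι → Bool) → ℤ) : Prop :=
  ∀ u v : ι → Bool, (∃! i, u i ≠ v i) → h u = h v + 1 ∨ h u = h v - 1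

def HasUniqueMaxOnFaces (h : (ι → Bool) → ℤ) : Prop :=
  ∀ i j, i ≠ j → ∀ v, ¬ ∃ x ∈ face i j v, ∃ y ∈ face i j v, x ≠ y ∧
    IsMaxOn h (face i j v) x ∧ IsMaxOn h (face i j v) y

theorem existsUnique_ne_update {e : ι → Bool} {i : ι} {b : Bool} (hb : e i ≠ b) :
    ∃! k, e k ≠ update e i b k := by
  refine ⟨i, by simpa using hb, fun k hk => ?_⟩
  by_contra hki
  exact hk (update_of_ne hki b e).symm

theorem eq_update_update_of_mem_face {i j : ι} {v z : ι → Bool} (hz : z ∈ face i j v) :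
    z = update (update v i (z i)) j (z j) := by
  funext k
  by_cases hkj : k = j
  · subst hkj; simp
  by_cases hki : k = i
  · subst hki; simp [hkj]
  simp [hki, hkj, hz k hki hkj]

theorem exists_ne_isMaxOn_face {h : (ι → Bool) → ℤ} {i j : ι} (hij : i ≠ j) {e : ι → Bool}
    (hi : e i = true) (hj : e j = true) {m : ℤ} (ha : h (update e i false) = m)
    (hb : h (update e j false) = m) (hc : h (update (update e i false) j false) ≤ m)
    (he : h e ≤ m) :
    ∃ x ∈ face i j e, ∃ y ∈ face i j e, x ≠ y ∧
      IsMaxOn h (face i j e) x ∧ IsMaxOn h (face i j e) y := by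
  have hei : update e i true = e := update_eq_self_iff.2 hi.symm
  have hej : update e j true = e := update_eq_self_iff.2 hj.symm
  have haj : update (update e i false) j true = update e i false :=
    update_eq_self_iff.2 (by rw [update_of_ne hij.symm, hj])
  have hbound : ∀ z ∈ face i j e, h z ≤ m := by
    intro z hz
    rw [eq_update_update_of_mem_face hz]
    cases z i <;> cases z j
    · exact hc
    · rw [haj]; exact ha.le
    · rw [hei]; exact hb.le
    · rw [hei, hej]; exact he
  refine ⟨update e i false, fun k hki _ => update_of_ne hki _ _,
    update e j false, fun k _ hkj => update_of_ne hkj _ _, fun hab => ?_,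
    isMaxOn_iff.2 fun z hz => ha ▸ hbound z hz, isMaxOn_iff.2 fun z hz => hb ▸ hbound z hz⟩
  simpa [update_of_ne hij, hi] using congrFun hab i

variable [Fintype ι]

theorem weight_update_false {e : ι → Bool} {i : ι} (hi : e i = true) :
    weight (update e i false) + 1 = weight e := by
  have : ({k | update e i false k = true} : Finset ι) = ({k | e k = true} : Finset ι).erase i := by
    ext k
    by_cases hk : k = i <;> simp [update_apply, hk]
  rw [weight, weight, this, card_erase_add_one (by simpa using hi)]

variable {h : (ι → Bool) → ℤ}

theorem eq_update_false_add_one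
    (hedge : IsUnitStepOnEdges h) (hsq : HasUniqueMaxOnFaces h) (hmin : ∀ e, h (fun _ => false) ≤ h e) {e : ι → Bool} {i : ι} (hi : e i = true)
    (IH : ∀ u, weight u < weight e → h u = h (fun _ => false) + weight u) :
    h e = h (update e i false) + 1 := by
  have hwa := weight_update_false hi
  have hha := IH (update e i false) (by omega)
  refine (hedge e _ (existsUnique_ne_update (by simp [hi]))).resolve_right fun hdown => ?_
  obtain ⟨j, hj⟩ : ∃ j, update e i false j = true := by
    refine exists_eq_true_of_weight_pos (Nat.pos_of_ne_zero fun ha0 => ?_)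
    have := hmin e
    rw [ha0] at hha
    push_cast at hha
    omega
  have hji : j ≠ i := by rintro rfl; simp at hj
  have hej : e j = true := by rwa [update_of_ne hji] at hj
  have hwb := weight_update_false hej
  have hwc := weight_update_false hj
  have hhb := IH (update e j false) (by omega)
  have hhc := IH (update (update e i false) j false) (by omega)
  refine hsq i j hji.symm e (exists_ne_isMaxOn_face hji.symm hi hej rfl ?_ ?_ (by omega))
  · rw [hhb, hha]; omega
  · rw [hhc, hha]; omega

theorem eq_add_weight
    (hedge : IsUnitStepOnEdges h) (hsq : HasUniqueMaxOnFaces h) (hmin : ∀ e, h (fun _ => false) ≤ h e) (e : ι → Bool) :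
    h e = h (fun _ => false) + weight e := by
  induction e using (InvImage.wf (weight : (ι → Bool) → ℕ) wellFounded_lt).induction with
  | h e IH =>
    rcases (weight e).eq_zero_or_pos with he | he
    · rw [he, eq_false_of_weight_eq_zero he]
      simp
    · obtain ⟨i, hi⟩ := exists_eq_true_of_weight_pos he
      have hwa := weight_update_false hi
      rw [eq_update_false_add_one hedge hsq hmin hi IH, IH _ (show weight _ < weight e by omega)]
      omega

end Hypercube

/-- The Claim in the proof of Proposition 2.4: an integer-valued function on the
vertices of the `n`-hypercube changing by exactly `1` along each edge, whose
restriction to every 2-dimensional face does not attain its maximum at two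
distinct vertices, and attaining a minimum at `0 = (0,…,0)`, satisfies
`h e = h 0 + ∑ i, e i`. -/
theorem stmt_0 (n : ℕ) (h : (Fin n → Bool) → ℤ)
    (hedge : ∀ u v : Fin n → Bool, (∃! i : Fin n, u i ≠ v i) →
      h u = h v + 1 ∨ h u = h v - 1)
    (hsq : ∀ (i j : Fin n), i ≠ j → ∀ v : Fin n → Bool,
      ¬ ∃ x y : Fin n → Bool,
        (∀ k, k ≠ i → k ≠ j → x k = v k) ∧ (∀ k, k ≠ i → k ≠ j → y k = v k) ∧
        x ≠ y ∧
        (∀ z : Fin n → Bool, (∀ k, k ≠ i → k ≠ j → z k = v k) → h z ≤ h x) ∧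
        (∀ z : Fin n → Bool, (∀ k, k ≠ i → k ≠ j → z k = v k) → h z ≤ h y))
    (hmin : ∀ e : Fin n → Bool, h (fun _ => false) ≤ h e) :
    ∀ e : Fin n → Bool,
      h e = h (fun _ => false) + ∑ i, (if e i then (1 : ℤ) else 0) := by
  intro e
  rw [sum_boole]
  exact Hypercube.eq_add_weight hedge (fun i j hij v ⟨x, hx, y, hy, hxy, hxmax, hymax⟩ =>
    hsq i j hij v ⟨x, y, hx, hy, hxy, isMaxOn_iff.1 hxmax, isMaxOn_iff.1 hymax⟩) hmin e
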